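/- Average-to-worst-case conversion: given a classical-quantum state ρ^{XB} = Σ_x P_X(x)|x⟩⟨x|^X ⊗ ρ_x^B with x ∈ X, for any ε ∈ (0,1) there exists a subset S ⊆ X with Pr_{P_X}[S] ≥ 1 − 2√ε such that for all x ∈ S, H_H^{√ε}(ρ_x^B) ≤ H_H^ε(B|X)_ρ − log ε. -/

import Mathlib

open Matrix Kronecker ComplexOrder

noncomputable section

def IsState {n : Type*} [Fintype n] (ρ : Matrix n n ℂ) : Prop :=
  ρ.PosSemidef ∧ ρ.trace = 1

/-- `2^{H_H^ε(ρ)}`: the optimal value of the hypothesis testing minimization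
`min { Tr Π : 0 ≤ Π ≤ I, Tr[Πρ] ≥ 1-ε }`. -/
def hypoVal {n : Type*} [Fintype n] [DecidableEq n] (ρ : Matrix n n ℂ) (ε : ℝ) : ℝ :=
  sInf {t : ℝ | ∃ P : Matrix n n ℂ, P.PosSemidef ∧ ((1 : Matrix n n ℂ) - P).PosSemidef ∧
    1 - ε ≤ ((P * ρ).trace).re ∧ t = (P.trace).re}

/-- The smooth hypothesis testing entropy `H_H^ε(ρ) = log₂` of the optimal value. -/
def HH {n : Type*} [Fintype n] [DecidableEq n] (ρ : Matrix n n ℂ) (ε : ℝ) : ℝ :=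
  Real.logb 2 (hypoVal ρ ε)

/-- Outer product `|ψ⟩⟨ψ|`. -/
def outer {n : Type*} (ψ : n → ℂ) : Matrix n n ℂ := Matrix.vecMulVec ψ (star ψ)

/-- Partial trace over the first tensor factor. -/
def ptL {α β : Type*} [Fintype α] (M : Matrix (α × β) (α × β) ℂ) : Matrix β β ℂ :=
  Matrix.of fun b1 b2 => ∑ a, M (a, b1) (a, b2)

/-- Partial trace over the second tensor factor. -/
def ptR {α β : Type*} [Fintype β] (M : Matrix (α × β) (α × β) ℂ) : Matrix α α ℂ :=
  Matrix.of fun a1 a2 => ∑ b, M (a1, b) (a2, b)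

/-- The trace norm `‖M‖₁ = Tr √(Mᴴ M)`. -/
def traceNorm {n : Type*} [Fintype n] [DecidableEq n] (M : Matrix n n ℂ) : ℝ :=
  (((Matrix.posSemidef_conjTranspose_mul_self M).1.eigenvectorUnitary.1 *
    Matrix.diagonal (((↑) : ℝ → ℂ) ∘ Real.sqrt ∘ (Matrix.posSemidef_conjTranspose_mul_self M).1.eigenvalues) *
    (star (Matrix.posSemidef_conjTranspose_mul_self M).1.eigenvectorUnitary : Matrix n n ℂ)).trace).re

end

/-- `2^{H_H^ε(B|X)}` for a cq state `Σ_x P(x)|x⟩⟨x| ⊗ ρ_x`, with block-diagonal tests. -/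
noncomputable def cqCondVal {X B : Type*} [Fintype X] [Fintype B] [DecidableEq B]
    (P : X → ℝ) (ρ : X → Matrix B B ℂ) (ε : ℝ) : ℝ :=
  sInf {t : ℝ | ∃ Q : X → Matrix B B ℂ,
    (∀ x, (Q x).PosSemidef ∧ ((1 : Matrix B B ℂ) - Q x).PosSemidef) ∧
    1 - ε ≤ ∑ x, P x * ((Q x * ρ x).trace).re ∧
    t = ∑ x, P x * ((Q x).trace).re}

section AuxLemmas

variable {n : Type*} [Fintype n] [DecidableEq n]

lemma trace_re_nonneg' {M : Matrix n n ℂ} (hM : M.PosSemidef) : 0 ≤ (M.trace).re := by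
  have h : ∀ i, 0 ≤ (M i i).re := by
    intro i
    have h := hM.re_dotProduct_nonneg (Pi.single i 1)
    simpa [dotProduct, Pi.single_apply] using h
  rw [Matrix.trace, Complex.re_sum]
  exact Finset.sum_nonneg fun i _ => h i

open scoped MatrixOrder in
lemma trace_mul_re_nonneg' {A B : Matrix n n ℂ} (hA : A.PosSemidef) (hB : B.PosSemidef) :
    0 ≤ ((A * B).trace).re := by
  set s := CFC.sqrt B with hsdef
  have hs : s * s = B := CFC.sqrt_mul_sqrt_self B hB.nonneg
  have h1 : (A * B).trace = (s * A * s).trace := by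
    rw [← hs, ← Matrix.mul_assoc, Matrix.trace_mul_cycle]
  have hpsd : (s * A * s).PosSemidef := by
    have h2 := hA.conjTranspose_mul_mul_same s
    rwa [(CFC.sqrt_nonneg B).posSemidef.isHermitian.eq] at h2
  rw [h1]
  exact trace_re_nonneg' hpsd

lemma one_sub_posSemidef' {ρ : Matrix n n ℂ} (h : ρ.PosSemidef) (h1 : ρ.trace = 1) :
    ((1 : Matrix n n ℂ) - ρ).PosSemidef := by
  have hH := h.isHermitian
  set U : Matrix n n ℂ := (hH.eigenvectorUnitary : Matrix n n ℂ) with hUdef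
  set D : Matrix n n ℂ := Matrix.diagonal (RCLike.ofReal ∘ hH.eigenvalues) with hDdef
  have hUU : U * Uᴴ = 1 := by
    rw [← Matrix.star_eq_conjTranspose]
    exact Matrix.mem_unitaryGroup_iff.mp hH.eigenvectorUnitary.2
  have hUU' : Uᴴ * U = 1 := by
    rw [← Matrix.star_eq_conjTranspose]
    exact Matrix.mem_unitaryGroup_iff'.mp hH.eigenvectorUnitary.2
  have hspec : ρ = U * D * Uᴴ := by
    rw [hDdef, hUdef, ← Matrix.star_eq_conjTranspose]; exact hH.spectral_theorem
  have key : (U * D * Uᴴ).trace = D.trace := by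
    rw [Matrix.trace_mul_cycle, hUU', Matrix.one_mul]
  have hDtr : D.trace = 1 := by rw [← key, ← hspec, h1]
  have htr : ∑ i, (hH.eigenvalues i : ℂ) = 1 := by
    rw [← hDtr, hDdef, Matrix.trace_diagonal]
    simp [RCLike.ofReal]
  have hsumev : ∑ i, hH.eigenvalues i = 1 := by
    have h2 : ((∑ i, hH.eigenvalues i : ℝ) : ℂ) = ((1 : ℝ) : ℂ) := by
      push_cast
      simpa using htr
    exact_mod_cast h2
  have hle : ∀ i, hH.eigenvalues i ≤ 1 := by
    intro i
    have := Finset.single_le_sum (f := hH.eigenvalues)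
      (fun j _ => h.eigenvalues_nonneg j) (Finset.mem_univ i)
    linarith [hsumev ▸ this]
  have hDpsd : ((1 : Matrix n n ℂ) - D).PosSemidef := by
    have heq : (1 : Matrix n n ℂ) - D
        = Matrix.diagonal (fun i => ((1 - hH.eigenvalues i : ℝ) : ℂ)) := by
      rw [hDdef, ← Matrix.diagonal_one, Matrix.diagonal_sub]
      congr 1
      funext i
      push_cast
      simp [RCLike.ofReal]
    rw [heq]
    exact Matrix.posSemidef_diagonal_iff.mpr fun i =>
      Complex.zero_le_real.mpr (by linarith [hle i])
  have hfin : (1 : Matrix n n ℂ) - ρ = U * ((1 : Matrix n n ℂ) - D) * Uᴴ := by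
    rw [Matrix.mul_sub, Matrix.sub_mul, Matrix.mul_one, hUU, ← hspec]
  rw [hfin]
  exact hDpsd.mul_mul_conjTranspose_same U

lemma trace_mul_le' {Q ρ : Matrix n n ℂ} (hQ : Q.PosSemidef) (hρ : ρ.PosSemidef)
    (h1 : ρ.trace = 1) : ((Q * ρ).trace).re ≤ (Q.trace).re := by
  have h := trace_mul_re_nonneg' hQ (one_sub_posSemidef' hρ h1)
  rw [Matrix.mul_sub, Matrix.mul_one, Matrix.trace_sub, Complex.sub_re] at h
  linarith

lemma trace_mul_le_one' {Q ρ : Matrix n n ℂ} (hQ1 : ((1 : Matrix n n ℂ) - Q).PosSemidef)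
    (hρ : ρ.PosSemidef) (h1 : ρ.trace = 1) : ((Q * ρ).trace).re ≤ 1 := by
  have h := trace_mul_re_nonneg' hQ1 hρ
  rw [Matrix.sub_mul, Matrix.one_mul, Matrix.trace_sub, Complex.sub_re, h1] at h
  simp at h
  linarith

lemma markov' {X : Type*} [Fintype X] (P f : X → ℝ) (hP : ∀ x, 0 ≤ P x) (hf : ∀ x, 0 ≤ f x)
    {M a : ℝ} (ha : 0 < a) (h : ∑ x, P x * f x ≤ M) [DecidablePred fun x => a < f x] :
    ∑ x ∈ Finset.univ.filter (fun x => a < f x), P x ≤ M / a := by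
  rw [le_div_iff₀ ha]
  calc (∑ x ∈ Finset.univ.filter (fun x => a < f x), P x) * a
      = ∑ x ∈ Finset.univ.filter (fun x => a < f x), P x * a := by rw [Finset.sum_mul]
    _ ≤ ∑ x ∈ Finset.univ.filter (fun x => a < f x), P x * f x := by
        refine Finset.sum_le_sum fun x hx => ?_
        exact mul_le_mul_of_nonneg_left (le_of_lt (Finset.mem_filter.mp hx).2) (hP x)
    _ ≤ ∑ x, P x * f x := by
        refine Finset.sum_le_sum_of_subset_of_nonneg (Finset.filter_subset _ _) ?_
        exact fun x _ _ => mul_nonneg (hP x) (hf x)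
    _ ≤ M := h
end AuxLemmas

/-- average-to-worst-case conversion for the conditional hypothesis
testing entropy of a cq state. -/
theorem stmt8 {X B : Type*} [Fintype X] [Fintype B] [DecidableEq B]
    (P : X → ℝ) (hP0 : ∀ x, 0 ≤ P x) (hP1 : ∑ x, P x = 1)
    (ρ : X → Matrix B B ℂ) (hρ : ∀ x, IsState (ρ x))
    (ε : ℝ) (hε0 : 0 < ε) (hε1 : ε < 1) :
    ∃ S : Finset X, 1 - 2 * Real.sqrt ε ≤ ∑ x ∈ S, P x ∧
      ∀ x ∈ S, HH (ρ x) (Real.sqrt ε) ≤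
        Real.logb 2 (cqCondVal P ρ ε) - Real.logb 2 ε := by
  classical
  set s := Real.sqrt ε with hsdef
  have hs0 : 0 < s := Real.sqrt_pos.mpr hε0
  have hss : s * s = ε := Real.mul_self_sqrt hε0.le
  have hs1 : s < 1 := by nlinarith
  -- the feasible set for cqCondVal
  set T := {t : ℝ | ∃ Q : X → Matrix B B ℂ,
    (∀ x, (Q x).PosSemidef ∧ ((1 : Matrix B B ℂ) - Q x).PosSemidef) ∧
    1 - ε ≤ ∑ x, P x * ((Q x * ρ x).trace).re ∧
    t = ∑ x, P x * ((Q x).trace).re} with hTdef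
  have hVT : cqCondVal P ρ ε = sInf T := rfl
  have hTne : T.Nonempty := by
    refine ⟨∑ x, P x * (((1 : Matrix B B ℂ)).trace).re, fun _ => 1, fun x =>
      ⟨Matrix.PosSemidef.one, by simpa using Matrix.PosSemidef.zero⟩, ?_, rfl⟩
    have h1 : ∑ x, P x * (((1 : Matrix B B ℂ) * ρ x).trace).re = 1 := by
      rw [← hP1]
      refine Finset.sum_congr rfl fun x _ => ?_
      rw [Matrix.one_mul, (hρ x).2]
      simp
    rw [h1]; linarith
  have hTlb : ∀ t ∈ T, 1 - ε ≤ t := by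
    rintro t ⟨Q, hQ, hfeas, rfl⟩
    refine le_trans hfeas (Finset.sum_le_sum fun x _ => ?_)
    exact mul_le_mul_of_nonneg_left (trace_mul_le' (hQ x).1 (hρ x).1 (hρ x).2) (hP0 x)
  have hTbdd : BddBelow T := ⟨1 - ε, hTlb⟩
  have hV1 : 1 - ε ≤ sInf T := le_csInf hTne hTlb
  have hV0 : 0 < sInf T := by linarith
  have hδ : sInf T < sInf T / s := by
    rw [lt_div_iff₀ hs0]; nlinarith
  obtain ⟨t, ht, htlt⟩ := (csInf_lt_iff hTbdd hTne).mp hδ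
  obtain ⟨Q, hQ, hfeas, rfl⟩ := ht
  -- Markov arguments
  set f1 : X → ℝ := fun x => 1 - ((Q x * ρ x).trace).re with hf1def
  have hf1 : ∀ x, 0 ≤ f1 x := fun x => by
    have := trace_mul_le_one' (hQ x).2 (hρ x).1 (hρ x).2
    simp only [hf1def]; linarith
  have hsum1 : ∑ x, P x * f1 x ≤ ε := by
    simp only [hf1def, mul_sub, mul_one]
    rw [Finset.sum_sub_distrib, hP1]
    linarith
  set f2 : X → ℝ := fun x => ((Q x).trace).re with hf2def
  have hf2 : ∀ x, 0 ≤ f2 x := fun x => trace_re_nonneg' (hQ x).1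
  have hsum2 : ∑ x, P x * f2 x ≤ sInf T / s := le_of_lt htlt
  set A1 := Finset.univ.filter (fun x => s < f1 x) with hA1def
  set A2 := Finset.univ.filter (fun x => sInf T / ε < f2 x) with hA2def
  have hA1 : ∑ x ∈ A1, P x ≤ s := by
    have h := markov' P f1 hP0 hf1 hs0 hsum1
    rwa [show ε / s = s by rw [← hss]; field_simp] at h
  have hA2 : ∑ x ∈ A2, P x ≤ s := by
    have h := markov' P f2 hP0 hf2 (div_pos hV0 hε0) hsum2
    rwa [show (sInf T / s) / (sInf T / ε) = s by
      rw [div_div_div_comm, div_self (ne_of_gt hV0), ← hss]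
      field_simp] at h
  refine ⟨Finset.univ \ (A1 ∪ A2), ?_, ?_⟩
  · have hsplit : ∑ x ∈ Finset.univ \ (A1 ∪ A2), P x
        = (∑ x, P x) - ∑ x ∈ A1 ∪ A2, P x :=
      Finset.sum_sdiff_eq_sub (Finset.subset_univ _)
    have hunion : ∑ x ∈ A1 ∪ A2, P x ≤ 2 * s := by
      have h := Finset.sum_union_inter (s₁ := A1) (s₂ := A2) (f := P)
      have hnn : 0 ≤ ∑ x ∈ A1 ∩ A2, P x := Finset.sum_nonneg fun x _ => hP0 x
      linarith
    rw [hsplit, hP1]; linarith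
  · intro x hx
    rw [Finset.mem_sdiff, Finset.mem_union] at hx
    obtain ⟨-, hx⟩ := hx
    push_neg at hx
    obtain ⟨hx1, hx2⟩ := hx
    rw [hA1def, Finset.mem_filter, not_and, not_lt] at hx1
    rw [hA2def, Finset.mem_filter, not_and, not_lt] at hx2
    have h1 : 1 - s ≤ ((Q x * ρ x).trace).re := by
      have := hx1 (Finset.mem_univ x); simp only [hf1def] at this; linarith
    have h2 : ((Q x).trace).re ≤ sInf T / ε := hx2 (Finset.mem_univ x)
    -- bound hypoVal
    set Hs := {t : ℝ | ∃ P' : Matrix B B ℂ, P'.PosSemidef ∧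
      ((1 : Matrix B B ℂ) - P').PosSemidef ∧
      1 - s ≤ ((P' * ρ x).trace).re ∧ t = (P'.trace).re} with hHsdef
    have hHV : hypoVal (ρ x) s = sInf Hs := rfl
    have hHsne : Hs.Nonempty := by
      refine ⟨((1 : Matrix B B ℂ)).trace.re, 1, Matrix.PosSemidef.one,
        by simpa using Matrix.PosSemidef.zero, ?_, rfl⟩
      rw [Matrix.one_mul, (hρ x).2]
      simp; linarith
    have hHslb : ∀ t ∈ Hs, 1 - s ≤ t := by
      rintro t ⟨P', hP', hP'1, hfe, rfl⟩
      exact le_trans hfe (trace_mul_le' hP' (hρ x).1 (hρ x).2)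
    have hHsbdd : BddBelow Hs := ⟨1 - s, hHslb⟩
    have hmem : ((Q x).trace).re ∈ Hs := ⟨Q x, (hQ x).1, (hQ x).2, h1, rfl⟩
    have hle : hypoVal (ρ x) s ≤ sInf T / ε := by
      rw [hHV]; exact le_trans (csInf_le hHsbdd hmem) h2
    have hpos : 0 < hypoVal (ρ x) s := by
      rw [hHV]
      have := le_csInf hHsne hHslb
      linarith
    show Real.logb 2 (hypoVal (ρ x) s) ≤ Real.logb 2 (cqCondVal P ρ ε) - Real.logb 2 ε
    rw [hVT]
    calc Real.logb 2 (hypoVal (ρ x) s) ≤ Real.logb 2 (sInf T / ε) :=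
          Real.logb_le_logb_of_le one_lt_two hpos hle
      _ = Real.logb 2 (sInf T) - Real.logb 2 ε := Real.logb_div (ne_of_gt hV0) (ne_of_gt hε0)
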